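/- For every integer b ≥ 1, reals 0 < m ≤ M, and every price sequence σ of length n ≥ 1 with all prices in [m, M], there exists i with 1 ≤ i ≤ 2^b such that max_k σ k ≤ (M/m)^{1/(2^b+1)} · profit(RPP(m^{(2^b+1−i)/(2^b+1)} · M^{i/(2^b+1)}), σ). (Hence b advice bits suffice to achieve competitive ratio (M/m)^{1/(2^b+1)} for online search, even when n is unknown.) -/

import Mathlib

/-!
With `T = 2 ^ b + 1`, the reservation prices `p i = m ^ ((T - i) / T) * M ^ (i / T)` form a
geometric grid from `p 0 = m` to `p T = M` with ratio `c = (M / m) ^ (1 / T)`. If the maximum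
price is below `p 1 = c * m`, every strategy earns at least `m`, which is enough. Otherwise the
maximum lies in some `[p i, p (i + 1)]` with `1 ≤ i ≤ 2 ^ b`, and `RPP (p i)` accepts a price
of at least `p i ≥ max / c`.
-/

/-- The maximum price of a price sequence of positive length. -/
noncomputable def maxPrice {n : ℕ} (hn : 0 < n) (σ : Fin n → ℝ) : ℝ :=
  Finset.univ.sup' ⟨⟨0, hn⟩, Finset.mem_univ _⟩ σ

/-- The profit of the reservation-price strategy `RPP p` on the price sequence
`σ`: it accepts at the least index `k` with `σ k ≥ p`, obtaining `σ k`; if no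
such index exists it must accept the last price `σ (n-1)`. -/
noncomputable def rppProfit {n : ℕ} (hn : 0 < n) (p : ℝ) (σ : Fin n → ℝ) : ℝ :=
  if h : ∃ k : Fin n, p ≤ σ k then
    σ ((Finset.univ.filter (fun k : Fin n => p ≤ σ k)).min'
      (h.imp fun k hk => Finset.mem_filter.mpr ⟨Finset.mem_univ _, hk⟩))
  else σ ⟨n - 1, Nat.sub_lt hn one_pos⟩

noncomputable def geomInterp (m M T t : ℝ) : ℝ :=
  m ^ ((T - t) / T) * M ^ (t / T)

theorem geomInterp_zero (m M : ℝ) {T : ℝ} (hT : T ≠ 0) : geomInterp m M T 0 = m := by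
  simp [geomInterp, hT]

theorem geomInterp_self (m M : ℝ) {T : ℝ} (hT : T ≠ 0) : geomInterp m M T T = M := by
  simp [geomInterp, hT]

theorem geomInterp_add_one {m M : ℝ} (hm : 0 < m) (hM : 0 < M) (T t : ℝ) :
    geomInterp m M T (t + 1) = (M / m) ^ (1 / T) * geomInterp m M T t := by
  have hm' : m ^ ((T - t) / T) = m ^ ((T - (t + 1)) / T) * m ^ (1 / T) := by
    rw [← Real.rpow_add hm]; ring_nf
  have hM' : M ^ ((t + 1) / T) = M ^ (t / T) * M ^ (1 / T) := by
    rw [← Real.rpow_add hM]; ring_nf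
  have hm1 : 0 < m ^ (1 / T) := Real.rpow_pos_of_pos hm _
  rw [geomInterp, geomInterp, hm', hM', Real.div_rpow hM.le hm.le]
  field_simp

theorem exists_le_le_succ_of_le_of_le {α : Type*} [LinearOrder α] (p : ℕ → α) {x : α}
    {a b : ℕ} (hab : a < b) (ha : p a ≤ x) (hb : x ≤ p b) :
    ∃ i, a ≤ i ∧ i < b ∧ p i ≤ x ∧ x ≤ p (i + 1) := by
  induction b, hab using Nat.le_induction with
  | base => exact ⟨a, le_rfl, Nat.lt_succ_self a, ha, hb⟩
  | succ b hab ih =>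
    rcases le_or_gt (p b) x with hbx | hxb
    · exact ⟨b, Nat.le_of_succ_le hab, Nat.lt_succ_self b, hbx, hb⟩
    · obtain ⟨i, hai, hib, hpi, hpi'⟩ := ih hxb.le
      exact ⟨i, hai, hib.trans (Nat.lt_succ_self b), hpi, hpi'⟩

section ReservationPrice

variable {n : ℕ} (hn : 0 < n) (σ : Fin n → ℝ)

theorem exists_rppProfit_eq (p : ℝ) : ∃ k, rppProfit hn p σ = σ k := by
  unfold rppProfit
  split_ifs <;> exact ⟨_, rfl⟩

theorem le_rppProfit {p : ℝ} (hp : p ≤ maxPrice hn σ) : p ≤ rppProfit hn p σ := by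
  obtain ⟨k, -, hk⟩ := Finset.exists_mem_eq_sup' ⟨⟨0, hn⟩, Finset.mem_univ _⟩ σ
  have hex : ∃ k : Fin n, p ≤ σ k := ⟨k, hp.trans hk.le⟩
  rw [rppProfit, dif_pos hex]
  exact (Finset.mem_filter.1 (Finset.min'_mem (Finset.univ.filter fun k => p ≤ σ k) _)).2

end ReservationPrice

theorem advice_upper_bound_c_competitive_general
    (b : ℕ) (m M : ℝ) (hm : 0 < m) (hmM : m ≤ M)
    (n : ℕ) (hn : 0 < n) (σ : Fin n → ℝ) (hσ : ∀ i, m ≤ σ i ∧ σ i ≤ M) :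
    ∃ i : ℕ, 1 ≤ i ∧ i ≤ 2 ^ b ∧
      maxPrice hn σ ≤ (M / m) ^ ((1 : ℝ) / (2 ^ b + 1)) *
        rppProfit hn
          (m ^ ((2 ^ b + 1 - (i : ℝ)) / (2 ^ b + 1)) * M ^ ((i : ℝ) / (2 ^ b + 1))) σ := by
  have hT : (2 ^ b + 1 : ℝ) ≠ 0 := by positivity
  set c := (M / m) ^ ((1 : ℝ) / (2 ^ b + 1))
  set p : ℕ → ℝ := fun i => geomInterp m M (2 ^ b + 1) i
  have hc : 0 ≤ c := Real.rpow_nonneg (div_nonneg (hm.le.trans hmM) hm.le) _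
  have hstep (i : ℕ) : p (i + 1) = c * p i := by
    simp only [p, Nat.cast_succ]
    exact geomInterp_add_one hm (hm.trans_le hmM) _ _
  have hmax : maxPrice hn σ ≤ p (2 ^ b + 1) := by
    have hM : maxPrice hn σ ≤ M := Finset.sup'_le _ _ fun k _ => (hσ k).2
    simpa [p, geomInterp_self m M hT] using hM
  rcases lt_or_ge (maxPrice hn σ) (p 1) with hlow | hhigh
  · refine ⟨1, le_rfl, Nat.one_le_two_pow, ?_⟩
    obtain ⟨k, hk⟩ := exists_rppProfit_eq hn σ (p 1)
    calc maxPrice hn σ ≤ p (0 + 1) := hlow.le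
      _ = c * m := by rw [hstep, show p 0 = m by simpa [p] using geomInterp_zero m M hT]
      _ ≤ c * rppProfit hn (p 1) σ := by rw [hk]; gcongr; exact (hσ k).1
  · obtain ⟨i, hi1, hiT, hpi, hpi1⟩ :=
      exists_le_le_succ_of_le_of_le p (Nat.lt_succ_of_le Nat.one_le_two_pow) hhigh hmax
    refine ⟨i, hi1, Nat.le_of_lt_succ hiT, ?_⟩
    calc maxPrice hn σ ≤ p (i + 1) := hpi1
      _ = c * p i := hstep i
      _ ≤ c * rppProfit hn (p i) σ := by gcongr; exact le_rppProfit hn σ hpi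

/-- For every `b ≥ 1`, reals `0 < m ≤ M`, and every price
sequence `σ` with prices in `[m, M]`, some reservation-price strategy among
`RPP(m^{(2^b+1-i)/(2^b+1)} M^{i/(2^b+1)})`, `1 ≤ i ≤ 2^b`, achieves competitive
ratio at most `(M/m)^{1/(2^b+1)}` on `σ`. Hence `b` advice bits suffice to be
`(M/m)^{1/(2^b+1)}`-competitive, even when `n` is unknown. -/
theorem advice_upper_bound_c_competitive
    (b : ℕ) (hb : 1 ≤ b) (m M : ℝ) (hm : 0 < m) (hmM : m ≤ M)
    (n : ℕ) (hn : 0 < n) (σ : Fin n → ℝ) (hσ : ∀ i, m ≤ σ i ∧ σ i ≤ M) :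
    ∃ i : ℕ, 1 ≤ i ∧ i ≤ 2 ^ b ∧
      maxPrice hn σ ≤ (M / m) ^ ((1 : ℝ) / (2 ^ b + 1)) *
        rppProfit hn
          (m ^ ((2 ^ b + 1 - (i : ℝ)) / (2 ^ b + 1)) * M ^ ((i : ℝ) / (2 ^ b + 1))) σ :=
  advice_upper_bound_c_competitive_general b m M hm hmM n hn σ hσ
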